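/- Let C be an associative conformal algebra with a faithful representation on a finitely generated module V over H = k[D]. Then C possesses a maximal nilpotent ideal; i.e., there is a nilpotent ideal N of C containing every nilpotent ideal of C. In particular, the union of any ascending chain of nilpotent ideals of C is nilpotent. -/
import Mathlib


open Finset

noncomputable section

variable (k : Type*) [Field k] [CharZero k] [IsAlgClosed k]
variable (C : Type*) [AddCommGroup C] [Module k C]
variable (V : Type*) [AddCommGroup V] [Module k V]

/-- `X ∘_ω Y`: the (`k`-span of the) set of all products `x ∘_n y`,
`x ∈ X`, `y ∈ Y`. -/
def mulSM (mul : ℕ → C →ₗ[k] C →ₗ[k] C) (Xs Ys : Submodule k C) : Submodule k C :=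
  Submodule.span k {z : C | ∃ (n : ℕ) (x : C) (y : C), x ∈ Xs ∧ y ∈ Ys ∧ z = mul n x y}

/-- Powers of an ideal: `pw mul I n` represents `I^{n+1}`, where
`I^1 = I` and `I^{m+1} = Σ_{a+b=m+1} I^a ∘_ω I^b`. -/
def pw (mul : ℕ → C →ₗ[k] C →ₗ[k] C) (I : Submodule k C) : ℕ → Submodule k C
  | 0 => I
  | n + 1 => ⨆ s : Fin (n + 1), mulSM k C mul (pw mul I s) (pw mul I (n - s))
  termination_by n => n
  decreasing_by
  · exact s.isLt
  · exact Nat.lt_succ_of_le (Nat.sub_le n s)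

/-- `I` is an ideal of the conformal algebra `(C, Dm, mul)`. -/
def IsConfIdeal (Dm : Module.End k C) (mul : ℕ → C →ₗ[k] C →ₗ[k] C)
    (I : Submodule k C) : Prop :=
  (∀ x ∈ I, Dm x ∈ I) ∧ ∀ (n : ℕ) (a : C), ∀ x ∈ I, mul n a x ∈ I ∧ mul n x a ∈ I

/-- `I` is a nilpotent ideal: `I^m = 0` for some `m`. -/
def IsNilpotentConfIdeal (mul : ℕ → C →ₗ[k] C →ₗ[k] C) (I : Submodule k C) : Prop :=
  ∃ m : ℕ, pw k C mul I m = ⊥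

/-! ### Auxiliary development -/

section ConfAux
set_option linter.unusedSectionVars false
set_option linter.unusedVariables false

open Polynomial

variable {k C V}
variable {mul : ℕ → C →ₗ[k] C →ₗ[k] C} {act : ℕ → C →ₗ[k] V →ₗ[k] V}

/-- span of the action of `X` on `W`. -/
def actSM (act : ℕ → C →ₗ[k] V →ₗ[k] V) (X : Submodule k C) (W : Submodule k V) :
    Submodule k V :=
  Submodule.span k {z : V | ∃ (n : ℕ) (x : C) (w : V), x ∈ X ∧ w ∈ W ∧ z = act n x w}

lemma mem_actSM {X : Submodule k C} {W : Submodule k V} {n : ℕ} {x : C} {w : V}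
    (hx : x ∈ X) (hw : w ∈ W) : act n x w ∈ actSM act X W :=
  Submodule.subset_span ⟨n, x, w, hx, hw, rfl⟩

lemma actSM_le {X : Submodule k C} {W : Submodule k V} {P : Submodule k V}
    (h : ∀ (n : ℕ) (x : C) (w : V), x ∈ X → w ∈ W → act n x w ∈ P) :
    actSM act X W ≤ P := by
  rw [actSM, Submodule.span_le]; rintro z ⟨n, x, w, hx, hw, rfl⟩; exact h n x w hx hw

lemma actSM_mono {X Y : Submodule k C} {W U : Submodule k V} (hXY : X ≤ Y) (hWU : W ≤ U) :
    actSM act X W ≤ actSM act Y U :=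
  actSM_le fun _ x w hx hw => mem_actSM (hXY hx) (hWU hw)

lemma actSM_bot (W : Submodule k V) : actSM act (⊥ : Submodule k C) W = ⊥ := by
  refine le_antisymm (actSM_le ?_) bot_le
  rintro n x w hx _
  rw [Submodule.mem_bot] at hx; simp [hx]

lemma actSM_sup_left (X Y : Submodule k C) (W : Submodule k V) :
    actSM act (X ⊔ Y) W = actSM act X W ⊔ actSM act Y W := by
  refine le_antisymm (actSM_le ?_) (sup_le (actSM_mono le_sup_left le_rfl)
    (actSM_mono le_sup_right le_rfl))
  intro n x w hx hw
  rcases Submodule.mem_sup.1 hx with ⟨x₁, hx₁, x₂, hx₂, rfl⟩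
  rw [map_add, LinearMap.add_apply]
  exact Submodule.add_mem _ (Submodule.mem_sup_left (mem_actSM hx₁ hw))
    (Submodule.mem_sup_right (mem_actSM hx₂ hw))

lemma actSM_sup_right (X : Submodule k C) (W U : Submodule k V) :
    actSM act X (W ⊔ U) = actSM act X W ⊔ actSM act X U := by
  refine le_antisymm (actSM_le ?_) (sup_le (actSM_mono le_rfl le_sup_left)
    (actSM_mono le_rfl le_sup_right))
  intro n x w hx hw
  rcases Submodule.mem_sup.1 hw with ⟨w₁, hw₁, w₂, hw₂, rfl⟩
  rw [map_add]
  exact Submodule.add_mem _ (Submodule.mem_sup_left (mem_actSM hx hw₁))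
    (Submodule.mem_sup_right (mem_actSM hx hw₂))

lemma mem_mulSM {X Y : Submodule k C} {n : ℕ} {x y : C}
    (hx : x ∈ X) (hy : y ∈ Y) : mul n x y ∈ mulSM k C mul X Y :=
  Submodule.subset_span ⟨n, x, y, hx, hy, rfl⟩

lemma mulSM_le {X Y P : Submodule k C}
    (h : ∀ (n : ℕ) (x y : C), x ∈ X → y ∈ Y → mul n x y ∈ P) :
    mulSM k C mul X Y ≤ P := by
  rw [mulSM, Submodule.span_le]; rintro z ⟨n, x, y, hx, hy, rfl⟩; exact h n x y hx hy

lemma mulSM_mono {X Y X' Y' : Submodule k C} (h1 : X ≤ X') (h2 : Y ≤ Y') :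
    mulSM k C mul X Y ≤ mulSM k C mul X' Y' :=
  mulSM_le fun _ x y hx hy => mem_mulSM (h1 hx) (h2 hy)

lemma pw_zero (I : Submodule k C) : pw k C mul I 0 = I := by rw [pw]

lemma pw_succ (I : Submodule k C) (n : ℕ) :
    pw k C mul I (n+1)
      = ⨆ s : Fin (n + 1), mulSM k C mul (pw k C mul I s) (pw k C mul I (n - s)) := by
  rw [pw]

lemma mulSM_le_pw_succ (I : Submodule k C) (n : ℕ) :
    mulSM k C mul I (pw k C mul I n) ≤ pw k C mul I (n+1) := by
  rw [pw_succ]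
  have := le_iSup (fun s : Fin (n+1) => mulSM k C mul (pw k C mul I s) (pw k C mul I (n - s)))
    ⟨0, Nat.succ_pos n⟩
  simpa [pw_zero] using this

lemma pw_mono {I J : Submodule k C} (h : I ≤ J) : ∀ n, pw k C mul I n ≤ pw k C mul J n := by
  intro n
  induction n using Nat.strong_induction_on with
  | _ n ih =>
    match n with
    | 0 => simpa [pw_zero] using h
    | n + 1 =>
      rw [pw_succ, pw_succ]
      exact iSup_mono fun s =>
        mulSM_mono (ih s s.isLt) (ih (n - s) (Nat.lt_succ_of_le (Nat.sub_le n s)))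

variable (act) in
/-- The descending chain `V ⊇ X·V ⊇ X·(X·V) ⊇ ⋯`. -/
def Uc (X : Submodule k C) : ℕ → Submodule k V
  | 0 => ⊤
  | s + 1 => actSM act X (Uc X s)

lemma Uc_zero (X : Submodule k C) : Uc act X 0 = ⊤ := rfl
lemma Uc_succ (X : Submodule k C) (s : ℕ) : Uc act X (s+1) = actSM act X (Uc act X s) := rfl

lemma Uc_antitone (X : Submodule k C) : ∀ s, Uc act X (s+1) ≤ Uc act X s := by
  intro s
  induction s with
  | zero => exact le_top
  | succ s ih => exact actSM_mono le_rfl ih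

lemma Uc_le_of_le {X : Submodule k C} {s t : ℕ} (h : s ≤ t) : Uc act X t ≤ Uc act X s := by
  induction t with
  | zero => simp [Nat.le_zero.1 h]
  | succ t ih =>
    rcases Nat.lt_or_ge s (t+1) with h' | h'
    · exact le_trans (Uc_antitone X t) (ih (Nat.lt_succ_iff.1 h'))
    · have : s = t + 1 := le_antisymm h h'
      simp [this]

lemma Uc_congr {X : Submodule k C} {a b : ℕ} (h : a = b) : Uc act X a = Uc act X b := by rw [h]

lemma Uc_C_inv
    (hM4 : ∀ (n m : ℕ) (a b : C) (v : V),
      act n a (act m b v) = ∑ s ∈ Finset.range (n + 1),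
        (n.choose s : k) • act (m + s) (mul (n - s) a b) v)
    {X : Submodule k C} (hX : ∀ (n : ℕ) (a : C), ∀ x ∈ X, mul n a x ∈ X) :
    ∀ s (n : ℕ) (a : C), ∀ w ∈ Uc act X s, act n a w ∈ Uc act X s := by
  intro s
  match s with
  | 0 => intro n a w _; exact Submodule.mem_top
  | s + 1 =>
    intro n a w hw
    rw [Uc_succ] at hw ⊢
    induction hw using Submodule.span_induction with
    | mem z hz =>
      obtain ⟨m, x, u, hx, hu, rfl⟩ := hz
      rw [hM4 n m a x u]
      refine Submodule.sum_mem _ fun t _ => Submodule.smul_mem _ _ ?_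
      exact mem_actSM (hX (n - t) a x hx) hu
    | zero => simp
    | add y z hy hz hy' hz' => rw [map_add]; exact Submodule.add_mem _ hy' hz'
    | smul c y hy hy' => rw [map_smul]; exact Submodule.smul_mem _ _ hy'

lemma Uc_Dv_inv {Dv : Module.End k V}
    (hM3' : ∀ (n : ℕ) (a : C) (v : V),
      act n a (Dv v) = Dv (act n a v) + (n : k) • act (n-1) a v)
    (X : Submodule k C) :
    ∀ s, ∀ w ∈ Uc act X s, Dv w ∈ Uc act X s := by
  intro s
  induction s with
  | zero => intro w _; exact Submodule.mem_top
  | succ s ih =>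
    intro w hw
    rw [Uc_succ] at hw ⊢
    induction hw using Submodule.span_induction with
    | mem z hz =>
      obtain ⟨m, x, u, hx, hu, rfl⟩ := hz
      have : Dv (act m x u) = act m x (Dv u) - (m : k) • act (m-1) x u := by
        rw [hM3' m x u]; abel
      rw [this]
      exact Submodule.sub_mem _ (mem_actSM hx (ih u hu))
        (Submodule.smul_mem _ _ (mem_actSM hx hu))
    | zero => simp
    | add y z hy hz hy' hz' => rw [map_add]; exact Submodule.add_mem _ hy' hz'
    | smul c y hy hy' => rw [map_smul]; exact Submodule.smul_mem _ _ hy'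

lemma act_mul_mem
    (hM4 : ∀ (n m : ℕ) (a b : C) (v : V),
      act n a (act m b v) = ∑ s ∈ Finset.range (n + 1),
        (n.choose s : k) • act (m + s) (mul (n - s) a b) v)
    {P : Submodule k V} {y z : C} {w : V}
    (h : ∀ i j : ℕ, act i y (act j z w) ∈ P) :
    ∀ (n m : ℕ), act m (mul n y z) w ∈ P := by
  intro n
  induction n using Nat.strong_induction_on with
  | _ n ih =>
    intro m
    have h4 := hM4 n m y z w
    rw [Finset.sum_range_succ'] at h4
    simp only [Nat.choose_zero_right, Nat.cast_one, one_smul, Nat.add_zero, Nat.sub_zero] at h4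
    have hsum : (∑ t ∈ Finset.range n,
        ((n.choose (t+1) : k)) • act (m + (t+1)) (mul (n - (t+1)) y z) w) ∈ P := by
      refine Submodule.sum_mem _ fun t ht => Submodule.smul_mem _ _ ?_
      exact ih (n - (t+1)) (by have := Finset.mem_range.1 ht; omega) (m + (t+1))
    have heq : act m (mul n y z) w = act n y (act m z w) - ∑ t ∈ Finset.range n,
        ((n.choose (t+1) : k)) • act (m + (t+1)) (mul (n - (t+1)) y z) w := by
      rw [h4]; abel
    rw [heq]
    exact Submodule.sub_mem _ (h n m) hsum

lemma act_pw_mem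
    (hM4 : ∀ (n m : ℕ) (a b : C) (v : V),
      act n a (act m b v) = ∑ s ∈ Finset.range (n + 1),
        (n.choose s : k) • act (m + s) (mul (n - s) a b) v)
    {X : Submodule k C} :
    ∀ s q (x : C), x ∈ pw k C mul X s → ∀ (n : ℕ) (w : V), w ∈ Uc act X q →
      act n x w ∈ Uc act X (s+1+q) := by
  intro s
  induction s using Nat.strong_induction_on with
  | _ s ih =>
    match s with
    | 0 =>
      intro q x hx n w hw
      rw [pw_zero] at hx
      rw [Uc_congr (show 0+1+q = q+1 by omega), Uc_succ]
      exact mem_actSM hx hw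
    | s + 1 =>
      intro q x hx n w hw
      rw [pw_succ] at hx
      induction hx using Submodule.iSup_induction' with
      | mem t x hx =>
        induction hx using Submodule.span_induction with
        | mem z hz =>
          obtain ⟨n', y, z', hy, hz', rfl⟩ := hz
          refine act_mul_mem hM4 (fun i j => ?_) n' n
          have hinner : act j z' w ∈ Uc act X ((s - t.1)+1+q) :=
            ih (s - t.1) (Nat.lt_succ_of_le (Nat.sub_le s t.1)) q z' hz' j w hw
          have houter : act i y (act j z' w) ∈ Uc act X (t.1+1+((s - t.1)+1+q)) :=
            ih t.1 (Nat.lt_succ_of_le (Nat.le_of_lt_succ t.isLt)) ((s - t.1)+1+q) y hy i _ hinner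
          rwa [Uc_congr (show t.1+1+((s - t.1)+1+q) = s+1+1+q by
            have := Nat.le_of_lt_succ t.isLt; omega)] at houter
        | zero => simp
        | add y z hy hz hy' hz' =>
          rw [map_add, LinearMap.add_apply]; exact Submodule.add_mem _ hy' hz'
        | smul c y hy hy' =>
          rw [map_smul, LinearMap.smul_apply]; exact Submodule.smul_mem _ _ hy'
      | zero => simp
      | add y z hy hz hy' hz' =>
        rw [map_add, LinearMap.add_apply]; exact Submodule.add_mem _ hy' hz'

lemma Uc_le_actSM_pw
    (hM4 : ∀ (n m : ℕ) (a b : C) (v : V),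
      act n a (act m b v) = ∑ s ∈ Finset.range (n + 1),
        (n.choose s : k) • act (m + s) (mul (n - s) a b) v)
    (X : Submodule k C) :
    ∀ s, Uc act X (s+1) ≤ actSM act (pw k C mul X s) ⊤ := by
  intro s
  induction s with
  | zero =>
    rw [Uc_succ, Uc_zero, pw_zero]
  | succ s ih =>
    rw [Uc_succ]
    refine le_trans (actSM_mono le_rfl ih) (actSM_le ?_)
    intro n x u hx hu
    induction hu using Submodule.span_induction with
    | mem z hz =>
      obtain ⟨m, y, v, hy, hv, rfl⟩ := hz
      rw [hM4 n m x y v]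
      refine Submodule.sum_mem _ fun t _ => Submodule.smul_mem _ _ ?_
      exact mem_actSM (mulSM_le_pw_succ X s (mem_mulSM hx hy)) Submodule.mem_top
    | zero => simp
    | add y z hy hz hy' hz' => rw [map_add]; exact Submodule.add_mem _ hy' hz'
    | smul c y hy hy' => rw [map_smul]; exact Submodule.smul_mem _ _ hy'

lemma Uc_bot_of_pw_bot
    (hM4 : ∀ (n m : ℕ) (a b : C) (v : V),
      act n a (act m b v) = ∑ s ∈ Finset.range (n + 1),
        (n.choose s : k) • act (m + s) (mul (n - s) a b) v)
    {X : Submodule k C} {s : ℕ} (h : pw k C mul X s = ⊥) : Uc act X (s+1) = ⊥ := by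
  refine le_antisymm ?_ bot_le
  refine le_trans (Uc_le_actSM_pw hM4 X s) ?_
  rw [h, actSM_bot]

lemma pw_bot_of_Uc_bot
    (hM4 : ∀ (n m : ℕ) (a b : C) (v : V),
      act n a (act m b v) = ∑ s ∈ Finset.range (n + 1),
        (n.choose s : k) • act (m + s) (mul (n - s) a b) v)
    (hfaith : ∀ a : C, (∀ (n : ℕ) (v : V), act n a v = 0) → a = 0)
    {X : Submodule k C} {s : ℕ} (h : Uc act X (s+1) = ⊥) : pw k C mul X s = ⊥ := by
  refine le_antisymm (fun x hx => ?_) bot_le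
  rw [Submodule.mem_bot]
  refine hfaith x fun n v => ?_
  have := act_pw_mem hM4 s 0 x hx n v Submodule.mem_top
  rwa [Uc_congr (show s+1+0 = s+1 by omega), h, Submodule.mem_bot] at this

/-! ### Commutation with powers of `Dv`, and killing of torsion -/

lemma act_Dv_pow {Dv : Module.End k V}
    (hM3' : ∀ (n : ℕ) (a : C) (v : V),
      act n a (Dv v) = Dv (act n a v) + (n : k) • act (n-1) a v)
    (a : C) :
    ∀ (m n : ℕ) (v : V), act n a ((Dv^m) v)
      = ∑ j ∈ Finset.range (m+1),
          ((m.choose j * n.descFactorial j : ℕ) : k) • (Dv^(m-j)) (act (n-j) a v) := by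
  intro m
  induction m with
  | zero => intro n v; simp
  | succ m ih =>
    intro n v
    have h1 : (Dv^(m+1)) v = (Dv^m) (Dv v) := by
      rw [pow_succ, Module.End.mul_apply]
    rw [h1, ih n (Dv v)]
    set T : ℕ → V := fun j => (Dv^(m+1-j)) (act (n-j) a v) with hT
    have expand : ∀ j ∈ Finset.range (m+1),
        ((m.choose j * n.descFactorial j : ℕ):k) • (Dv^(m-j)) (act (n-j) a (Dv v))
          = ((m.choose j * n.descFactorial j : ℕ):k) • T j
            + ((m.choose j * n.descFactorial (j+1) : ℕ):k) • T (j+1) := by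
      intro j hj
      have hjm : j ≤ m := Nat.lt_succ_iff.1 (Finset.mem_range.1 hj)
      rw [hM3' (n-j) a v, map_add, map_smul, smul_add, smul_smul]
      congr 1
      · rw [hT]
        have : (Dv^(m-j)) (Dv (act (n-j) a v)) = (Dv^(m-j+1)) (act (n-j) a v) := by
          rw [pow_succ, Module.End.mul_apply]
        rw [this]
        have he : m - j + 1 = m + 1 - j := by omega
        rw [he]
      · simp only [hT]
        have h2 : m + 1 - (j+1) = m - j := by omega
        have h3 : n - (j+1) = n - j - 1 := by omega
        rw [h2, h3]
        rw [Nat.descFactorial_succ]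
        push_cast
        ring_nf
    rw [Finset.sum_congr rfl expand, Finset.sum_add_distrib]
    have hext : ∑ j ∈ Finset.range (m+1), ((m.choose j * n.descFactorial j : ℕ):k) • T j
        = ∑ j ∈ Finset.range (m+2), ((m.choose j * n.descFactorial j : ℕ):k) • T j := by
      rw [Finset.sum_range_succ (n := m+1)]
      simp [Nat.choose_succ_self]
    rw [hext]
    rw [Finset.sum_range_succ' (fun j => ((m.choose j * n.descFactorial j : ℕ):k) • T j) (m+1)]
    rw [Finset.sum_range_succ'
      (fun j => (((m+1).choose j * n.descFactorial j : ℕ):k) • T j) (m+1)]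
    simp only [Nat.choose_zero_right, Nat.descFactorial_zero, mul_one, Nat.cast_one, one_smul]
    rw [add_right_comm, ← Finset.sum_add_distrib]
    congr 1
    refine Finset.sum_congr rfl fun j hj => ?_
    rw [← add_smul]
    congr 1
    rw [Nat.choose_succ_succ]
    push_cast
    ring

lemma pow_inv {Dv : Module.End k V} {W : Submodule k V} (hWD : ∀ w ∈ W, Dv w ∈ W) :
    ∀ (j : ℕ), ∀ w ∈ W, (Dv^j) w ∈ W := by
  intro j
  induction j with
  | zero => intro w hw; simpa using hw
  | succ j ih =>
    intro w hw
    rw [pow_succ, Module.End.mul_apply]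
    exact ih _ (hWD w hw)

lemma aeval_mem {Dv : Module.End k V} {W : Submodule k V} (hWD : ∀ w ∈ W, Dv w ∈ W)
    (p : Polynomial k) {w : V} (hw : w ∈ W) : (Polynomial.aeval Dv p) w ∈ W := by
  rw [Polynomial.aeval_eq_sum_range]
  rw [LinearMap.sum_apply]
  refine Submodule.sum_mem _ fun i _ => ?_
  rw [LinearMap.smul_apply]
  exact Submodule.smul_mem _ _ (pow_inv hWD i w hw)

lemma torsion_kill {Dv : Module.End k V}
    (hM1 : ∀ (a : C) (v : V), ∃ N : ℕ, ∀ n ≥ N, act n a v = 0)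
    (hM3' : ∀ (n : ℕ) (a : C) (v : V),
      act n a (Dv v) = Dv (act n a v) + (n : k) • act (n-1) a v)
    {W : Submodule k V} (hWD : ∀ w ∈ W, Dv w ∈ W)
    (hWC : ∀ (n : ℕ) (x : C), ∀ w ∈ W, act n x w ∈ W)
    {p : Polynomial k} (hp : p ≠ 0) {v : V} (hv : (Polynomial.aeval Dv p) v ∈ W) :
    ∀ (n : ℕ) (a : C), act n a v ∈ W := by
  intro n₀ a
  set d := p.natDegree with hd
  obtain ⟨N₀, hN₀⟩ := hM1 a v
  suffices h : ∀ (K n : ℕ), N₀ ≤ n + K → act n a v ∈ W by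
    exact h N₀ n₀ (Nat.le_add_left _ _)
  intro K
  induction K with
  | zero =>
    intro n hn
    rw [hN₀ n (by omega)]
    exact Submodule.zero_mem _
  | succ K ih =>
    intro n hn
    by_cases hc : N₀ ≤ n + K
    · exact ih n hc
    have hall : ∀ m, n < m → act m a v ∈ W := fun m hm => ih m (by omega)
    have hmem : act (n + d) a ((Polynomial.aeval Dv p) v) ∈ W := hWC _ _ _ hv
    rw [Polynomial.aeval_eq_sum_range, LinearMap.sum_apply, map_sum] at hmem
    simp only [LinearMap.smul_apply, map_smul] at hmem
    rw [Finset.sum_congr rfl (fun i _ => by rw [act_Dv_pow hM3' a i (n+d) v])] at hmem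
    rw [← hd] at hmem
    rw [Finset.sum_range_succ] at hmem
    rw [Finset.sum_range_succ] at hmem
    have hWrest : (∑ i ∈ Finset.range d, p.coeff i •
        ∑ j ∈ Finset.range (i+1), ((i.choose j * (n+d).descFactorial j : ℕ):k)
          • (Dv^(i-j)) (act (n+d-j) a v)) ∈ W := by
      refine Submodule.sum_mem _ fun i hi => Submodule.smul_mem _ _ ?_
      refine Submodule.sum_mem _ fun j hj => Submodule.smul_mem _ _ ?_
      have hij : j ≤ i := Nat.lt_succ_iff.1 (Finset.mem_range.1 hj)
      have hid : i < d := Finset.mem_range.1 hi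
      exact pow_inv hWD _ _ (hall (n+d-j) (by omega))
    have hWrest2 : (∑ j ∈ Finset.range d, ((d.choose j * (n+d).descFactorial j : ℕ):k)
        • (Dv^(d-j)) (act (n+d-j) a v)) ∈ W := by
      refine Submodule.sum_mem _ fun j hj => Submodule.smul_mem _ _ ?_
      have hjd : j < d := Finset.mem_range.1 hj
      exact pow_inv hWD _ _ (hall (n+d-j) (by omega))
    have hkey : p.coeff d • (((d.choose d * (n+d).descFactorial d : ℕ):k)
        • (Dv^(d-d)) (act (n+d-d) a v)) ∈ W := by
      have h1 := Submodule.sub_mem _ hmem hWrest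
      have h2 : p.coeff d • ((∑ j ∈ Finset.range d,
          ((d.choose j * (n+d).descFactorial j : ℕ):k) • (Dv^(d-j)) (act (n+d-j) a v))
          + ((d.choose d * (n+d).descFactorial d : ℕ):k) • (Dv^(d-d)) (act (n+d-d) a v)) ∈ W := by
        convert h1 using 1
        abel
      rw [smul_add] at h2
      have h3 := Submodule.sub_mem _ h2 (Submodule.smul_mem _ (p.coeff d) hWrest2)
      simpa using h3
    simp only [Nat.choose_self, one_mul, Nat.sub_self, pow_zero, Module.End.one_apply,
      Nat.add_sub_cancel] at hkey
    rw [smul_smul] at hkey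
    have hα : (p.coeff d * (((n+d).descFactorial d : ℕ):k)) ≠ 0 := by
      refine mul_ne_zero ?_ ?_
      · rw [hd]
        exact Polynomial.leadingCoeff_ne_zero.2 hp
      · refine Nat.cast_ne_zero.2 ?_
        intro h0
        have := Nat.descFactorial_eq_zero_iff_lt.1 h0
        omega
    have h4 := Submodule.smul_mem _ (p.coeff d * (((n+d).descFactorial d : ℕ):k))⁻¹ hkey
    rwa [smul_smul, inv_mul_cancel₀ hα, one_smul] at h4

/-! ### Stabilization of the chain -/

lemma two_torsion_stab {Dv : Module.End k V}
    (hM1 : ∀ (a : C) (v : V), ∃ N : ℕ, ∀ n ≥ N, act n a v = 0)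
    (hM3' : ∀ (n : ℕ) (a : C) (v : V),
      act n a (Dv v) = Dv (act n a v) + (n : k) • act (n-1) a v)
    (hM4 : ∀ (n m : ℕ) (a b : C) (v : V),
      act n a (act m b v) = ∑ s ∈ Finset.range (n + 1),
        (n.choose s : k) • act (m + s) (mul (n - s) a b) v)
    {X : Submodule k C} (hX : ∀ (n : ℕ) (a : C), ∀ x ∈ X, mul n a x ∈ X) {s : ℕ}
    (hs : ∀ w ∈ Uc act X s, ∃ p : Polynomial k, p ≠ 0 ∧
      (Polynomial.aeval Dv p) w ∈ Uc act X (s+1))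
    (hs1 : ∀ w ∈ Uc act X (s+1), ∃ p : Polynomial k, p ≠ 0 ∧
      (Polynomial.aeval Dv p) w ∈ Uc act X (s+2)) :
    Uc act X (s+1) = Uc act X (s+2) := by
  refine le_antisymm ?_ (Uc_antitone _ _)
  rw [Uc_succ]
  refine actSM_le fun n x w hx hw => ?_
  obtain ⟨p, hp, hpw⟩ := hs w hw
  obtain ⟨q, hq, hqw⟩ := hs1 _ hpw
  have hqp : (Polynomial.aeval Dv (q * p)) w ∈ Uc act X (s+2) := by
    rw [map_mul, Module.End.mul_apply]; exact hqw
  exact torsion_kill hM1 hM3' (fun w' hw' => Uc_Dv_inv hM3' X _ w' hw')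
    (fun n' x' w' hw' => Uc_C_inv hM4 hX _ n' x' w' hw') (mul_ne_zero hq hp) hqp n x

lemma Uc_stab {X : Submodule k C} {s : ℕ}
    (h : Uc act X (s+1) = Uc act X (s+2)) :
    ∀ t, s+1 ≤ t → Uc act X t = Uc act X (s+1) := by
  intro t ht
  induction t with
  | zero => omega
  | succ t ih =>
    rcases Nat.lt_or_ge s t with h' | h'
    · have hts := ih (by omega)
      have : Uc act X (t+1) = actSM act X (Uc act X t) := Uc_succ X t
      rw [this, hts, ← Uc_succ]
      exact h.symm
    · have : t = s := by omega
      rw [this]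

lemma stab_exists {Dv : Module.End k V}
    (hM1 : ∀ (a : C) (v : V), ∃ N : ℕ, ∀ n ≥ N, act n a v = 0)
    (hM3' : ∀ (n : ℕ) (a : C) (v : V),
      act n a (Dv v) = Dv (act n a v) + (n : k) • act (n-1) a v)
    (hM4 : ∀ (n m : ℕ) (a b : C) (v : V),
      act n a (act m b v) = ∑ s ∈ Finset.range (n + 1),
        (n.choose s : k) • act (m + s) (mul (n - s) a b) v)
    {gen : Finset V}
    (hgen : ∀ v : V, v ∈ Submodule.span k {x : V | ∃ g ∈ gen, ∃ s : ℕ, x = (Dv ^ s) g})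
    {X : Submodule k C} (hX : ∀ (n : ℕ) (a : C), ∀ x ∈ X, mul n a x ∈ X) :
    ∃ s ≤ 2 * gen.card, Uc act X (s+1) = Uc act X (s+2) := by
  classical
  by_contra hcon
  push_neg at hcon
  set r := gen.card with hr
  -- free steps
  have hfree : ∀ i : ℕ, i ≤ r → ∃ s, (s = 2*i ∨ s = 2*i+1) ∧
      ∃ w ∈ Uc act X s, ∀ p : Polynomial k, p ≠ 0 →
        (Polynomial.aeval Dv p) w ∉ Uc act X (s+1) := by
    intro i hi
    by_contra hnf
    push_neg at hnf
    have htor : ∀ s, (s = 2*i ∨ s = 2*i+1) → ∀ w ∈ Uc act X s,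
        ∃ p : Polynomial k, p ≠ 0 ∧ (Polynomial.aeval Dv p) w ∈ Uc act X (s+1) := by
      intro s hs w hw
      have := hnf s hs w hw
      obtain ⟨p, hp, hpw⟩ := this
      exact ⟨p, hp, not_not.1 (by simpa using hpw)⟩
    have hstab := two_torsion_stab hM1 hM3' hM4 hX
      (htor (2*i) (Or.inl rfl))
      (by
        have := htor (2*i+1) (Or.inr rfl)
        intro w hw
        exact this w hw)
    exact hcon (2*i) (by omega) hstab
  choose σ hσor w hwU hwfree using hfree
  -- pass to the polynomial module
  letI VA := Module.AEval' Dv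
  let of : V ≃ₗ[k] VA := Module.AEval'.of Dv
  have hsmul : ∀ (p : Polynomial k) (v : V), p • (of v) = of ((Polynomial.aeval Dv p) v) := by
    intro p v
    exact (Module.AEval.of_aeval_smul Dv p v).symm
  -- the images of gen span VA over k[X]
  have hspan : Submodule.span (Polynomial k)
      ((gen.image (fun g => of g) : Finset VA) : Set VA) = ⊤ := by
    refine le_antisymm le_top ?_
    intro va _
    have hv := hgen (of.symm va)
    have hle : Submodule.span k {x : V | ∃ g ∈ gen, ∃ s : ℕ, x = (Dv ^ s) g} ≤
        Submodule.comap (of.toLinearMap) ((Submodule.span (Polynomial k)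
          ((gen.image (fun g => of g) : Finset VA) : Set VA)).restrictScalars k) := by
      rw [Submodule.span_le]
      rintro x ⟨g, hg, s, rfl⟩
      simp only [SetLike.mem_coe, Submodule.mem_comap, Submodule.restrictScalars_mem, LinearEquiv.coe_coe]
      have : of ((Dv ^ s) g) = (Polynomial.X ^ s : Polynomial k) • of g := by
        rw [hsmul]
        congr 1
        rw [map_pow, Polynomial.aeval_X]
      rw [this]
      refine Submodule.smul_mem _ _ (Submodule.subset_span ?_)
      simp only [Finset.coe_image, Set.mem_image, Finset.mem_coe]
      exact ⟨g, hg, rfl⟩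
    have := hle hv
    simpa using this
  -- linear independence of the w's
  have hind : LinearIndependent (Polynomial k) (fun i : Fin (r+1) => of (w i.1 (by omega))) := by
    rw [Fintype.linearIndependent_iff]
    intro g hg
    by_contra hgne
    push_neg at hgne
    obtain ⟨i₁, hi₁⟩ := hgne
    set S := Finset.univ.filter (fun i : Fin (r+1) => g i ≠ 0) with hS
    have hSne : S.Nonempty := ⟨i₁, by simp [hS, hi₁]⟩
    set i₀ := S.min' hSne with hi₀
    have hi₀S : i₀ ∈ S := S.min'_mem hSne
    have hgi₀ : g i₀ ≠ 0 := by
      have := hi₀S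
      rw [hS, Finset.mem_filter] at this
      exact this.2
    -- push the equation through of.symm
    have hsum : (∑ i : Fin (r+1), (Polynomial.aeval Dv (g i)) (w i.1 (by omega))) = 0 := by
      have := congrArg of.symm hg
      rw [map_sum, map_zero] at this
      rw [← this]
      refine Finset.sum_congr rfl fun i _ => ?_
      rw [hsmul, LinearEquiv.symm_apply_apply]
    have hrest : (∑ i ∈ Finset.univ.erase i₀,
        (Polynomial.aeval Dv (g i)) (w i.1 (by omega))) ∈ Uc act X (σ i₀.1 (by omega) + 1) := by
      refine Submodule.sum_mem _ fun i hi => ?_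
      by_cases hgi : g i = 0
      · simp [hgi]
      · have hiS : i ∈ S := by simp [hS, hgi]
        have hii : i₀ ≤ i := S.min'_le i hiS
        have hilt : i₀ < i := lt_of_le_of_ne hii (by
          intro hcontra
          exact (Finset.mem_erase.1 hi).1 (by rw [hcontra]))
        -- σ is strictly monotone
        have hσlt : σ i₀.1 (by omega) + 1 ≤ σ i.1 (by omega) := by
          rcases hσor i₀.1 (by omega) with h1 | h1 <;>
          rcases hσor i.1 (by omega) with h2 | h2 <;>
          · rw [h1, h2]; have : (i₀ : ℕ) < (i : ℕ) := hilt; omega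
        have hwi : w i.1 (by omega) ∈ Uc act X (σ i₀.1 (by omega) + 1) :=
          Uc_le_of_le hσlt (hwU i.1 (by omega))
        exact aeval_mem (fun w' hw' => Uc_Dv_inv hM3' X _ w' hw') _ hwi
    have : (Polynomial.aeval Dv (g i₀)) (w i₀.1 (by omega)) ∈ Uc act X (σ i₀.1 (by omega) + 1) := by
      have hsplit : (Polynomial.aeval Dv (g i₀)) (w i₀.1 (by omega))
          = (∑ i : Fin (r+1), (Polynomial.aeval Dv (g i)) (w i.1 (by omega)))
            - ∑ i ∈ Finset.univ.erase i₀, (Polynomial.aeval Dv (g i)) (w i.1 (by omega)) := by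
        rw [← Finset.add_sum_erase _ _ (Finset.mem_univ i₀)]
        abel
      rw [hsplit, hsum, zero_sub]
      exact Submodule.neg_mem _ hrest
    exact hwfree i₀.1 (by omega) (g i₀) hgi₀ this
  -- contradiction with the spanning bound
  have hcard := linearIndependent_le_span_finset _ hind (gen.image (fun g => of g)) hspan
  have hcard2 : (gen.image (fun g => of g)).card ≤ r := Finset.card_image_le
  rw [Cardinal.mk_fintype] at hcard
  simp only [Fintype.card_fin] at hcard
  have : ((r+1 : ℕ) : Cardinal) ≤ (r : ℕ) := le_trans hcard (by exact_mod_cast hcard2)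
  have : (r+1 : ℕ) ≤ r := by exact_mod_cast this
  omega

/-! ### Uniform bound, sums, directed suprema -/

lemma uniform_bound {Dv : Module.End k V}
    (hM1 : ∀ (a : C) (v : V), ∃ N : ℕ, ∀ n ≥ N, act n a v = 0)
    (hM3' : ∀ (n : ℕ) (a : C) (v : V),
      act n a (Dv v) = Dv (act n a v) + (n : k) • act (n-1) a v)
    (hM4 : ∀ (n m : ℕ) (a b : C) (v : V),
      act n a (act m b v) = ∑ s ∈ Finset.range (n + 1),
        (n.choose s : k) • act (m + s) (mul (n - s) a b) v)
    (hfaith : ∀ a : C, (∀ (n : ℕ) (v : V), act n a v = 0) → a = 0)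
    {gen : Finset V}
    (hgen : ∀ v : V, v ∈ Submodule.span k {x : V | ∃ g ∈ gen, ∃ s : ℕ, x = (Dv ^ s) g})
    {X : Submodule k C} (hX : ∀ (n : ℕ) (a : C), ∀ x ∈ X, mul n a x ∈ X)
    (hnil : ∃ m : ℕ, pw k C mul X m = ⊥) :
    pw k C mul X (2 * gen.card + 1) = ⊥ := by
  obtain ⟨m, hm⟩ := hnil
  obtain ⟨s, hsle, hstab⟩ := stab_exists hM1 hM3' hM4 hgen hX
  have hUm : Uc act X (m+1) = (⊥ : Submodule k V) := Uc_bot_of_pw_bot hM4 hm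
  have hconst := Uc_stab hstab
  have hU : Uc act X (2 * gen.card + 2) = (⊥ : Submodule k V) := by
    rcases Nat.le_total (m+1) (s+1) with h | h
    · exact le_antisymm (le_trans (Uc_le_of_le (show m+1 ≤ 2*gen.card+2 by omega))
        (le_of_eq hUm)) bot_le
    · have h1 := hconst (m+1) h
      have h2 := hconst (2 * gen.card + 2) (by omega)
      rw [h2, ← h1, hUm]
  exact pw_bot_of_Uc_bot hM4 hfaith hU

lemma Uc_sup_le
    (hM4 : ∀ (n m : ℕ) (a b : C) (v : V),
      act n a (act m b v) = ∑ s ∈ Finset.range (n + 1),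
        (n.choose s : k) • act (m + s) (mul (n - s) a b) v)
    {I J : Submodule k C}
    (hI : ∀ (n : ℕ) (a : C), ∀ x ∈ I, mul n a x ∈ I)
    (hJ : ∀ (n : ℕ) (a : C), ∀ x ∈ J, mul n a x ∈ J) :
    ∀ t p q, p + q = t → Uc act (I ⊔ J) t ≤ Uc act I p ⊔ Uc act J q := by
  intro t
  induction t with
  | zero =>
    intro p q hpq
    have hp : p = 0 := by omega
    subst hp
    rw [Uc_zero]
    exact le_sup_of_le_left le_top
  | succ t ih =>
    intro p q hpq
    match p, q with
    | 0, q => rw [Uc_zero]; exact le_sup_of_le_left le_top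
    | p+1, 0 => rw [Uc_zero]; exact le_sup_of_le_right le_top
    | p+1, q+1 =>
      rw [Uc_succ, actSM_sup_left]
      refine sup_le ?_ ?_
      · have h1 : Uc act (I ⊔ J) t ≤ Uc act I p ⊔ Uc act J (q+1) := ih p (q+1) (by omega)
        refine le_trans (actSM_mono le_rfl h1) ?_
        rw [actSM_sup_right]
        refine sup_le ?_ ?_
        · exact le_sup_of_le_left (le_of_eq (Uc_succ I p).symm)
        · refine le_sup_of_le_right (actSM_le fun n x w hx hw => ?_)
          exact Uc_C_inv hM4 hJ (q+1) n x w hw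
      · have h1 : Uc act (I ⊔ J) t ≤ Uc act I (p+1) ⊔ Uc act J q := ih (p+1) q (by omega)
        refine le_trans (actSM_mono le_rfl h1) ?_
        rw [actSM_sup_right]
        refine sup_le ?_ ?_
        · refine le_sup_of_le_left (actSM_le fun n x w hx hw => ?_)
          exact Uc_C_inv hM4 hI (p+1) n x w hw
        · exact le_sup_of_le_right (le_of_eq (Uc_succ J q).symm)

lemma pw_iSup {ι : Type*} [Nonempty ι] {I : ι → Submodule k C} (hdir : Directed (· ≤ ·) I) :
    ∀ m, pw k C mul (⨆ i, I i) m = ⨆ i, pw k C mul (I i) m := by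
  intro m
  induction m using Nat.strong_induction_on with
  | _ m ih =>
    match m with
    | 0 =>
      rw [pw_zero]
      exact iSup_congr fun i => (pw_zero (I i)).symm
    | m + 1 =>
      refine le_antisymm ?_ (iSup_le fun i => pw_mono (le_iSup I i) (m+1))
      rw [pw_succ]
      refine iSup_le fun s => ?_
      rw [ih s s.isLt, ih (m - s) (Nat.lt_succ_of_le (Nat.sub_le m s))]
      refine mulSM_le fun n x y hx hy => ?_
      have hdx : Directed (· ≤ ·) (fun i => pw k C mul (I i) (s : ℕ)) := fun i j => by
        obtain ⟨l, h1, h2⟩ := hdir i j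
        exact ⟨l, pw_mono h1 s, pw_mono h2 s⟩
      have hdy : Directed (· ≤ ·) (fun i => pw k C mul (I i) (m - (s : ℕ))) := fun i j => by
        obtain ⟨l, h1, h2⟩ := hdir i j
        exact ⟨l, pw_mono h1 (m - s), pw_mono h2 (m - s)⟩
      rw [Submodule.mem_iSup_of_directed _ hdx] at hx
      rw [Submodule.mem_iSup_of_directed _ hdy] at hy
      obtain ⟨i, hx⟩ := hx
      obtain ⟨j, hy⟩ := hy
      obtain ⟨l, hil, hjl⟩ := hdir i j
      have hmem : mul n x y ∈ pw k C mul (I l) (m+1) := by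
        refine SetLike.le_def.mp ?_ (mem_mulSM (pw_mono hil s hx) (pw_mono hjl (m - s) hy))
        rw [pw_succ (I l) m]
        exact le_iSup (fun s' : Fin (m+1) =>
          mulSM k C mul (pw k C mul (I l) s') (pw k C mul (I l) (m - s'))) s
      exact SetLike.le_def.mp (le_iSup (fun i => pw k C mul (I i) (m+1)) l) hmem

end ConfAux

/-- Theorem 5.5.3(i): an associative conformal algebra with a faithful
representation of finite type possesses a maximal nilpotent ideal; in
particular the union of any ascending chain of nilpotent ideals is nilpotent. -/
theorem exists_maximal_nilpotent_ideal
    (Dm : Module.End k C) (mul : ℕ → C →ₗ[k] C →ₗ[k] C)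
    -- C is an associative conformal algebra:
    (hloc : ∀ a b : C, ∃ N : ℕ, ∀ n ≥ N, mul n a b = 0)
    (hC2₀ : ∀ a b : C, mul 0 (Dm a) b = 0)
    (hC2 : ∀ (n : ℕ) (a b : C), mul (n + 1) (Dm a) b = -((n + 1 : k)) • mul n a b)
    (hC3₀ : ∀ a b : C, mul 0 a (Dm b) = Dm (mul 0 a b))
    (hC3 : ∀ (n : ℕ) (a b : C),
      mul (n + 1) a (Dm b) = Dm (mul (n + 1) a b) + ((n + 1 : k)) • mul n a b)
    (hassoc : ∀ (n m : ℕ) (a b c : C),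
      mul m (mul n a b) c = ∑ s ∈ Finset.range (n + 1),
        (((-1 : k) ^ s) * (n.choose s : k)) • mul (n - s) a (mul (m + s) b c))
    -- V is a module over C (a representation), with D acting by Dv:
    (Dv : Module.End k V) (act : ℕ → C →ₗ[k] V →ₗ[k] V)
    (hM1 : ∀ (a : C) (v : V), ∃ N : ℕ, ∀ n ≥ N, act n a v = 0)
    (hM2₀ : ∀ (a : C) (v : V), act 0 (Dm a) v = 0)
    (hM2 : ∀ (n : ℕ) (a : C) (v : V),
      act (n + 1) (Dm a) v = -((n + 1 : k)) • act n a v)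
    (hM3₀ : ∀ (a : C) (v : V), act 0 a (Dv v) = Dv (act 0 a v))
    (hM3 : ∀ (n : ℕ) (a : C) (v : V),
      act (n + 1) a (Dv v) = Dv (act (n + 1) a v) + ((n + 1 : k)) • act n a v)
    (hM4 : ∀ (n m : ℕ) (a b : C) (v : V),
      act n a (act m b v) = ∑ s ∈ Finset.range (n + 1),
        (n.choose s : k) • act (m + s) (mul (n - s) a b) v)
    -- the representation is faithful:
    (hfaith : ∀ a : C, (∀ (n : ℕ) (v : V), act n a v = 0) → a = 0)
    -- V is a finitely generated H-module (H = k[D], D acting by Dv):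
    (hfin : ∃ gen : Finset V, ∀ v : V,
      v ∈ Submodule.span k {x : V | ∃ g ∈ gen, ∃ s : ℕ, x = (Dv ^ s) g}) :
    ∃ Nmax : Submodule k C,
      IsConfIdeal k C Dm mul Nmax ∧ IsNilpotentConfIdeal k C mul Nmax ∧
      (∀ I : Submodule k C, IsConfIdeal k C Dm mul I →
        IsNilpotentConfIdeal k C mul I → I ≤ Nmax) ∧
      (∀ f : ℕ → Submodule k C, Monotone f →
        (∀ i, IsConfIdeal k C Dm mul (f i) ∧ IsNilpotentConfIdeal k C mul (f i)) →
        IsNilpotentConfIdeal k C mul (⨆ i, f i)) := by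
  classical
  obtain ⟨gen, hgen⟩ := hfin
  -- the combined form of the third module axiom
  have hM3' : ∀ (n : ℕ) (a : C) (v : V),
      act n a (Dv v) = Dv (act n a v) + (n : k) • act (n-1) a v := by
    intro n a v
    cases n with
    | zero => rw [hM3₀]; simp
    | succ n =>
      rw [hM3 n a v]
      have h1 : ((n+1 : ℕ) : k) = (n : k) + 1 := by push_cast; ring
      have h2 : n + 1 - 1 = n := by omega
      rw [h1, h2]
  -- the uniform bound on nilpotency degree
  have hbound : ∀ X : Submodule k C, IsConfIdeal k C Dm mul X →
      IsNilpotentConfIdeal k C mul X → pw k C mul X (2 * gen.card + 1) = ⊥ := by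
    intro X hXI hXn
    exact uniform_bound hM1 hM3' hM4 hfaith hgen
      (fun n a x hx => (hXI.2 n a x hx).1) hXn
  -- suprema of conformal ideals are conformal ideals
  have hsupIdeal : ∀ {ι : Type _} (J : ι → Submodule k C),
      (∀ i, IsConfIdeal k C Dm mul (J i)) → IsConfIdeal k C Dm mul (⨆ i, J i) := by
    intro ι J hJ
    constructor
    · intro x hx
      have h1 : ∀ i, J i ≤ Submodule.comap Dm (⨆ i, J i) := by
        intro i y hy
        exact Submodule.mem_comap.2 (SetLike.le_def.mp (le_iSup J i) ((hJ i).1 y hy))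
      exact Submodule.mem_comap.1 ((iSup_le h1) hx)
    · intro n a x hx
      constructor
      · have h1 : ∀ i, J i ≤ Submodule.comap (mul n a) (⨆ i, J i) := by
          intro i y hy
          exact Submodule.mem_comap.2 (SetLike.le_def.mp (le_iSup J i) ((hJ i).2 n a y hy).1)
        exact Submodule.mem_comap.1 ((iSup_le h1) hx)
      · have h1 : ∀ i, J i ≤ Submodule.comap ((mul n).flip a) (⨆ i, J i) := by
          intro i y hy
          have := ((hJ i).2 n a y hy).2
          exact Submodule.mem_comap.2 (SetLike.le_def.mp (le_iSup J i) this)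
        have := Submodule.mem_comap.1 ((iSup_le h1) hx)
        simpa using this
  -- the family of nilpotent conformal ideals
  let ι := {I : Submodule k C // IsConfIdeal k C Dm mul I ∧ IsNilpotentConfIdeal k C mul I}
  have hbotmem : IsConfIdeal k C Dm mul (⊥ : Submodule k C) ∧
      IsNilpotentConfIdeal k C mul (⊥ : Submodule k C) := by
    refine ⟨⟨?_, ?_⟩, ⟨0, pw_zero ⊥⟩⟩
    · intro x hx
      rw [Submodule.mem_bot] at hx
      simp [hx]
    · intro n a x hx
      rw [Submodule.mem_bot] at hx
      subst hx
      simp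
  haveI : Nonempty ι := ⟨⟨⊥, hbotmem⟩⟩
  -- directedness : sum of two nilpotent conformal ideals is a nilpotent conformal ideal
  have hsum : ∀ I J : Submodule k C,
      IsConfIdeal k C Dm mul I → IsNilpotentConfIdeal k C mul I →
      IsConfIdeal k C Dm mul J → IsNilpotentConfIdeal k C mul J →
      IsConfIdeal k C Dm mul (I ⊔ J) ∧ IsNilpotentConfIdeal k C mul (I ⊔ J) := by
    intro I J hIc hIn hJc hJn
    constructor
    · constructor
      · intro x hx
        rcases Submodule.mem_sup.1 hx with ⟨x₁, hx₁, x₂, hx₂, rfl⟩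
        rw [map_add]
        exact Submodule.add_mem _ (Submodule.mem_sup_left (hIc.1 x₁ hx₁))
          (Submodule.mem_sup_right (hJc.1 x₂ hx₂))
      · intro n a x hx
        rcases Submodule.mem_sup.1 hx with ⟨x₁, hx₁, x₂, hx₂, rfl⟩
        constructor
        · rw [map_add]
          exact Submodule.add_mem _ (Submodule.mem_sup_left (hIc.2 n a x₁ hx₁).1)
            (Submodule.mem_sup_right (hJc.2 n a x₂ hx₂).1)
        · rw [map_add, LinearMap.add_apply]
          exact Submodule.add_mem _ (Submodule.mem_sup_left (hIc.2 n a x₁ hx₁).2)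
            (Submodule.mem_sup_right (hJc.2 n a x₂ hx₂).2)
    · obtain ⟨mI, hmI⟩ := hIn
      obtain ⟨mJ, hmJ⟩ := hJn
      have hUI : Uc act I (mI+1) = (⊥ : Submodule k V) := Uc_bot_of_pw_bot hM4 hmI
      have hUJ : Uc act J (mJ+1) = (⊥ : Submodule k V) := Uc_bot_of_pw_bot hM4 hmJ
      have hle := Uc_sup_le hM4 (fun n a x hx => (hIc.2 n a x hx).1)
        (fun n a x hx => (hJc.2 n a x hx).1) ((mI+1)+(mJ+1)) (mI+1) (mJ+1) rfl
      rw [hUI, hUJ, sup_idem] at hle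
      have hU : Uc act (I ⊔ J) ((mI + mJ + 1) + 1) = (⊥ : Submodule k V) := by
        refine le_antisymm ?_ bot_le
        rw [Uc_congr (show (mI + mJ + 1) + 1 = (mI+1)+(mJ+1) by omega)]
        exact hle
      exact ⟨mI + mJ + 1, pw_bot_of_Uc_bot hM4 hfaith hU⟩
  have hdir : Directed (· ≤ ·) (fun I : ι => I.1) := by
    intro I J
    obtain ⟨h1, h2⟩ := hsum I.1 J.1 I.2.1 I.2.2 J.2.1 J.2.2
    exact ⟨⟨I.1 ⊔ J.1, h1, h2⟩, le_sup_left, le_sup_right⟩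
  -- the maximal nilpotent ideal
  refine ⟨⨆ I : ι, I.1, ?_, ?_, ?_, ?_⟩
  · exact hsupIdeal (fun I : ι => I.1) (fun I => I.2.1)
  · refine ⟨2 * gen.card + 1, ?_⟩
    rw [pw_iSup hdir, iSup_eq_bot]
    intro I
    exact hbound I.1 I.2.1 I.2.2
  · intro I hI hnil
    exact le_iSup (fun I : ι => I.1) ⟨I, hI, hnil⟩
  · intro f hmono hprops
    have hle : (⨆ i, f i) ≤ ⨆ I : ι, I.1 :=
      iSup_le fun i => le_iSup (fun I : ι => I.1) ⟨f i, (hprops i).1, (hprops i).2⟩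
    have hNnil : pw k C mul (⨆ I : ι, I.1) (2 * gen.card + 1) = ⊥ := by
      rw [pw_iSup hdir, iSup_eq_bot]
      intro I
      exact hbound I.1 I.2.1 I.2.2
    exact ⟨2 * gen.card + 1,
      le_antisymm (le_trans (pw_mono hle (2 * gen.card + 1)) (le_of_eq hNnil)) bot_le⟩

end
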